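/- For the extended loop Schrödinger–Virasoro Lie conformal algebra, the bilinear maps ψ defined by ψ_λ(N_i,N_j) = q_{i+j}λ (all other pairs zero) and φ defined by φ_λ(L_i,N_j) = −e_{i+j}λ², φ_λ(N_j,L_i) = e_{i+j}λ² (all other pairs zero), for any functions q, e: ℤ → ℂ, are 2-cocycles. -/

import Mathlib

open Polynomial

/-- Generators of the extended loop Schrödinger–Virasoro Lie conformal algebra. -/
inductive GenE : Type
  | L : ℤ → GenE
  | M : ℤ → GenE
  | Y : ℤ → GenE
  | N : ℤ → GenE
  deriving DecidableEq

/-- The λ-bracket of generators of the extended loop Schrödinger–Virasoro Lie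
conformal algebra (λ evaluated at `l`, ∂ = `X`). -/
noncomputable def brE (l : ℂ) : GenE → GenE → (GenE →₀ Polynomial ℂ)
  | GenE.L i, GenE.L j => Finsupp.single (GenE.L (i + j)) (X + C (2 * l))
  | GenE.L i, GenE.M j => Finsupp.single (GenE.M (i + j)) (X + C l)
  | GenE.M i, GenE.L j => Finsupp.single (GenE.M (i + j)) (C l)
  | GenE.L i, GenE.Y j => Finsupp.single (GenE.Y (i + j)) (X + C ((3/2) * l))
  | GenE.Y i, GenE.L j => Finsupp.single (GenE.Y (i + j)) (C (1/2) * X + C ((3/2) * l))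
  | GenE.Y i, GenE.Y j => Finsupp.single (GenE.M (i + j)) (X + C (2 * l))
  | GenE.L i, GenE.N j => Finsupp.single (GenE.N (i + j)) (X + C l)
  | GenE.N i, GenE.L j => Finsupp.single (GenE.N (i + j)) (C l)
  | GenE.N i, GenE.M j => Finsupp.single (GenE.M (i + j)) (C 2)
  | GenE.M i, GenE.N j => Finsupp.single (GenE.M (i + j)) (C (-2))
  | GenE.N i, GenE.Y j => Finsupp.single (GenE.Y (i + j)) 1
  | GenE.Y i, GenE.N j => Finsupp.single (GenE.Y (i + j)) (C (-1))
  | _, _ => 0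

/-- ψ with ψ_λ(N_i,N_j) = q_{i+j}λ, all other pairs zero. -/
noncomputable def psiQ (q : ℤ → ℂ) : GenE → GenE → Polynomial ℂ
  | GenE.N i, GenE.N j => C (q (i + j)) * X
  | _, _ => 0

/-- φ with φ_λ(L_i,N_j) = −e_{i+j}λ², φ_λ(N_j,L_i) = e_{i+j}λ², all other pairs zero. -/
noncomputable def phiE (e : ℤ → ℂ) : GenE → GenE → Polynomial ℂ
  | GenE.L i, GenE.N j => C (-(e (i + j))) * X ^ 2
  | GenE.N i, GenE.L j => C (e (i + j)) * X ^ 2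
  | _, _ => 0

/-! Both forms are supported on pairs containing some `N_k`, and an `N` occurs in a bracket of
generators only as `[L_i λ N_j] = (∂+λ)N_{i+j}` and `[N_i λ L_j] = λN_{i+j}`. Hence the cocycle
identity is nontrivial only on triples of `L`'s and `N`'s, where both sides depend on the indices
through their sum alone and reduce to polynomial identities in `λ` and `μ`. -/

def IsSkewSymmetric {G : Type*} (φ : G → G → ℂ[X]) : Prop :=
  ∀ (x y : G) (l : ℂ), (φ x y).eval l = -((φ y x).eval (-l))

def SatisfiesCocycleJacobi {G : Type*} (br : ℂ → G → G → G →₀ ℂ[X]) (φ : G → G → ℂ[X]) :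
    Prop :=
  ∀ (x y z : G) (l m : ℂ),
    ((br l x y).sum fun h p => p.eval (-(l + m)) * (φ h z).eval (l + m))
      = ((br m y z).sum fun h p => p.eval l * (φ x h).eval l)
        - ((br l x z).sum fun h p => p.eval m * (φ y h).eval m)

theorem psiQ_isSkewSymmetric (q : ℤ → ℂ) : IsSkewSymmetric (psiQ q) := by
  intro x y l
  cases x <;> cases y <;> simp [psiQ, add_comm]

theorem phiE_isSkewSymmetric (e : ℤ → ℂ) : IsSkewSymmetric (phiE e) := by
  intro x y l
  cases x <;> cases y <;> simp [phiE, add_comm]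

theorem psiQ_satisfiesCocycleJacobi (q : ℤ → ℂ) : SatisfiesCocycleJacobi brE (psiQ q) := by
  intro x y z l m
  cases x <;> cases y <;> cases z <;>
    simp only [brE, psiQ, Finsupp.sum_single_index, Finsupp.sum_zero_index, mul_zero, zero_mul,
      eval_add, eval_mul, eval_C, eval_X, eval_one, eval_zero, add_comm, add_left_comm] <;> ring

theorem phiE_satisfiesCocycleJacobi (e : ℤ → ℂ) : SatisfiesCocycleJacobi brE (phiE e) := by
  intro x y z l m
  cases x <;> cases y <;> cases z <;>
    simp only [brE, phiE, Finsupp.sum_single_index, Finsupp.sum_zero_index, mul_zero, zero_mul,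
      eval_add, eval_mul, eval_C, eval_X, eval_one, eval_zero, eval_pow, add_comm,
      add_left_comm] <;> ring

/-- For any q, e : ℤ → ℂ, both ψ and φ are 2-cocycles on the extended loop
Schrödinger–Virasoro Lie conformal algebra: skew-symmetric and satisfying the
cocycle Jacobi identity φ_{λ+μ}([x λ y],z) = φ_λ(x,[y μ z]) − φ_μ(y,[x λ z]). -/
theorem stmt_12 (q e : ℤ → ℂ) :
    (∀ (x y : GenE) (l : ℂ), (psiQ q x y).eval l = -((psiQ q y x).eval (-l)))
    ∧ (∀ (x y z : GenE) (l m : ℂ),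
        ((brE l x y).sum fun h p => p.eval (-(l + m)) * (psiQ q h z).eval (l + m))
          = ((brE m y z).sum fun h p => p.eval l * (psiQ q x h).eval l)
            - ((brE l x z).sum fun h p => p.eval m * (psiQ q y h).eval m))
    ∧ (∀ (x y : GenE) (l : ℂ), (phiE e x y).eval l = -((phiE e y x).eval (-l)))
    ∧ (∀ (x y z : GenE) (l m : ℂ),
        ((brE l x y).sum fun h p => p.eval (-(l + m)) * (phiE e h z).eval (l + m))
          = ((brE m y z).sum fun h p => p.eval l * (phiE e x h).eval l)
            - ((brE l x z).sum fun h p => p.eval m * (phiE e y h).eval m)) :=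
  ⟨psiQ_isSkewSymmetric q, psiQ_satisfiesCocycleJacobi q, phiE_isSkewSymmetric e,
    phiE_satisfiesCocycleJacobi e⟩
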